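/- arXiv:1403.3280 — 2 statements merged into one kernel-verified Lean document; each statement's English description precedes it below -/
import Mathlib

section
/- Let {Y_t; t ≥ 1} be nonnegative random variables (with values in [0,∞]) satisfying P({Y_r > x} ∩ {Y_t > x}) ≤ P(Y_r > x) P(Y_{t-r} > x) for all 1 ≤ r < t and all x > 0. If ∑_{t=1}^∞ P(Y_t > x) = ∞ for some x > 0, then P(Y_t > x infinitely often) ≥ 1/2. -/
open MeasureTheory ProbabilityTheory Filter
open scoped ENNReal NNReal

noncomputable section

instance {m n α : Type*} [MeasurableSpace α] : MeasurableSpace (Matrix m n α) :=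
  inferInstanceAs (MeasurableSpace (m → n → α))

/-- The sequence `W` is i.i.d. under `μ`. -/
def IsIIDSeq {Ω β : Type*} [MeasurableSpace Ω] [MeasurableSpace β]
    (μ : Measure Ω) (W : ℕ → Ω → β) : Prop :=
  iIndepFun W μ ∧ ∀ t, IdentDistrib (W t) (W 0) μ μ

/-- The ordered product `M 0 * M 1 * ⋯ * M (n-1)` (the paper's `M₁ M₂ ⋯ Mₙ`, in
0-based indexing; the empty product is the identity matrix). -/
def prodTo {Ω : Type*} {d : ℕ} (M : ℕ → Ω → Matrix (Fin d) (Fin d) ℝ) (n : ℕ) (ω : Ω) :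
    Matrix (Fin d) (Fin d) ℝ :=
  ((List.range n).map (fun j => M j ω)).prod

/-- The ordered product `M a * M (a+1) * ⋯ * M (b-1)` (empty product for `a ≥ b`). -/
def prodSeg {Ω : Type*} {d : ℕ} (M : ℕ → Ω → Matrix (Fin d) (Fin d) ℝ) (a b : ℕ) (ω : Ω) :
    Matrix (Fin d) (Fin d) ℝ :=
  ((List.range (b - a)).map (fun j => M (a + j) ω)).prod

/-- Application of a matrix to a vector of Euclidean space (so that the norms involved
are the Euclidean norm and the induced spectral operator norm). -/
def app {d : ℕ} (A : Matrix (Fin d) (Fin d) ℝ) (v : EuclideanSpace ℝ (Fin d)) :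
    EuclideanSpace ℝ (Fin d) :=
  Matrix.toEuclideanCLM (𝕜 := ℝ) A v

/-- The spectral norm of a matrix: the operator norm induced by the Euclidean norm. -/
def sNorm {d : ℕ} (A : Matrix (Fin d) (Fin d) ℝ) : ℝ :=
  ‖Matrix.toEuclideanCLM (𝕜 := ℝ) A‖

/-- Outer product `u vᵀ` of two vectors. -/
def outer {d : ℕ} (u v : EuclideanSpace ℝ (Fin d)) : Matrix (Fin d) (Fin d) ℝ :=
  Matrix.of fun i j => u i * v j

/-!
Let `A t = {Y_t > x}` and `S_n = ∑_{t ≤ n} P(A_t)`. Splitting the double sum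
`∑_{r,t ≤ n} P(A_r ∩ A_t)` into its diagonal and the two triangles, the hypothesis bounds each
triangle by `∑_r P(A_r) ∑_{s ≤ n} P(A_s) = S_n²`, so the double sum is at most `S_n + 2 S_n²`.
By Cauchy–Schwarz applied to `N = ∑_{k < t ≤ n} 1_{A_t}`, which vanishes off `⋃_{t > k} A_t`,
`(S_n - S_k)² ≤ (S_n + 2 S_n²) P(⋃_{t > k} A_t)`; letting `n → ∞` (so `S_n → ∞`) gives
`P(⋃_{t > k} A_t) ≥ 1/2` for every `k`, and continuity from above gives the claim
(the Kochen–Stone argument).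
-/

open Finset Topology

lemma sum_Ioc_sub_le_sum_Ioc {p : ℕ → ℝ} (hp : ∀ t, 0 ≤ p t) (r n : ℕ) :
    ∑ t ∈ Ioc r n, p (t - r) ≤ ∑ t ∈ Ioc 0 n, p t := by
  calc ∑ t ∈ Ioc r n, p (t - r) = ∑ s ∈ Ioc 0 (n - r), p s :=
        sum_nbij' (· - r) (· + r) (fun t ht => by simp only [mem_Ioc] at ht ⊢; omega)
          (fun s hs => by simp only [mem_Ioc] at hs ⊢; omega)
          (fun t ht => by simp only [mem_Ioc] at ht; omega)
          (fun s _ => Nat.add_sub_cancel s r) (fun _ _ => rfl)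
    _ ≤ ∑ t ∈ Ioc 0 n, p t :=
        sum_le_sum_of_subset_of_nonneg (Ioc_subset_Ioc_right (n.sub_le r)) fun t _ _ => hp t

lemma sum_Ioc_sum_Ioc_le_of_le_mul_sub {p : ℕ → ℝ} {q : ℕ → ℕ → ℝ} (hp : ∀ t, 0 ≤ p t)
    (hdiag : ∀ t, q t t = p t) (hsymm : ∀ r t, q r t = q t r)
    (hq : ∀ r t, 1 ≤ r → r < t → q r t ≤ p r * p (t - r)) (n : ℕ) :
    ∑ r ∈ Ioc 0 n, ∑ t ∈ Ioc 0 n, q r t ≤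
      ∑ t ∈ Ioc 0 n, p t + 2 * (∑ t ∈ Ioc 0 n, p t) ^ 2 := by
  set S := ∑ t ∈ Ioc 0 n, p t
  let g : ℕ → ℕ → ℝ := fun r t => if r < t then p r * p (t - r) else 0
  have hpoint : ∀ r ∈ Ioc 0 n, ∀ t ∈ Ioc 0 n,
      q r t ≤ (if r = t then p r else 0) + g r t + g t r := by
    intro r hr t ht
    have hr1 : 1 ≤ r := (mem_Ioc.1 hr).1
    have ht1 : 1 ≤ t := (mem_Ioc.1 ht).1
    rcases lt_trichotomy r t with hrt | rfl | htr
    · simp [g, hrt, hrt.ne, hrt.not_gt, hq r t hr1 hrt]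
    · simp [g, hdiag]
    · simp [g, htr, htr.ne', htr.not_gt, hsymm r t, hq t r ht1 htr]
  have hg : ∑ r ∈ Ioc 0 n, ∑ t ∈ Ioc 0 n, g r t ≤ S ^ 2 := by
    calc ∑ r ∈ Ioc 0 n, ∑ t ∈ Ioc 0 n, g r t = ∑ r ∈ Ioc 0 n, p r * ∑ t ∈ Ioc r n, p (t - r) := by
          refine sum_congr rfl fun r _ => ?_
          rw [mul_sum, ← sum_filter]
          congr 1
          ext t
          simp only [mem_filter, mem_Ioc]
          omega
      _ ≤ ∑ r ∈ Ioc 0 n, p r * S :=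
          sum_le_sum fun r _ => mul_le_mul_of_nonneg_left (sum_Ioc_sub_le_sum_Ioc hp r n) (hp r)
      _ = S ^ 2 := by rw [← sum_mul, sq]
  calc ∑ r ∈ Ioc 0 n, ∑ t ∈ Ioc 0 n, q r t
      ≤ ∑ r ∈ Ioc 0 n, ∑ t ∈ Ioc 0 n, ((if r = t then p r else 0) + g r t + g t r) :=
        sum_le_sum fun r hr => sum_le_sum fun t ht => hpoint r hr t ht
    _ = S + ∑ r ∈ Ioc 0 n, ∑ t ∈ Ioc 0 n, g r t + ∑ r ∈ Ioc 0 n, ∑ t ∈ Ioc 0 n, g t r := by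
        simp only [sum_add_distrib]
        congr 2
        exact sum_congr rfl fun r hr => by rw [sum_ite_eq, if_pos hr]
    _ ≤ S + 2 * S ^ 2 := by rw [sum_comm (f := fun r t => g t r)]; linarith

lemma sq_lintegral_le_lintegral_sq_mul_measure {Ω : Type*} [MeasurableSpace Ω] (μ : Measure Ω)
    {f : Ω → ℝ≥0∞} (hf : AEMeasurable f μ) {s : Set Ω} (hs : MeasurableSet s)
    (hfs : Function.support f ⊆ s) :
    (∫⁻ ω, f ω ∂μ) ^ 2 ≤ (∫⁻ ω, f ω ^ 2 ∂μ) * μ s := by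
  set g : Ω → ℝ≥0∞ := s.indicator 1
  have hfg : f * g = f := by
    ext ω
    by_cases hω : ω ∈ s
    · simp [g, hω]
    · simp [Function.notMem_support.1 fun h => hω (hfs h)]
  have hg : ∫⁻ ω, g ω ^ (2 : ℝ) ∂μ = μ s := by
    have hsq : ∀ ω, g ω ^ (2 : ℝ) = g ω := fun ω => by by_cases hω : ω ∈ s <;> simp [g, hω]
    simp only [hsq, g, lintegral_indicator_one hs]
  have hgm : AEMeasurable g μ := aemeasurable_one.indicator hs
  have hholder := ENNReal.lintegral_mul_le_Lp_mul_Lq μ Real.HolderConjugate.two_two hf hgm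
  rw [hfg, hg] at hholder
  calc (∫⁻ ω, f ω ∂μ) ^ 2
      ≤ ((∫⁻ ω, f ω ^ (2 : ℝ) ∂μ) ^ (1 / 2 : ℝ) * μ s ^ (1 / 2 : ℝ)) ^ 2 := by gcongr
    _ = (∫⁻ ω, f ω ^ 2 ∂μ) * μ s := by
        rw [mul_pow, ← ENNReal.rpow_natCast, ← ENNReal.rpow_natCast, ← ENNReal.rpow_mul,
          ← ENNReal.rpow_mul]
        norm_num

lemma sq_sum_measure_le_sum_sum_measure_inter_mul {Ω ι : Type*} [MeasurableSpace Ω]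
    (μ : Measure Ω) {A : ι → Set Ω} (hA : ∀ t, MeasurableSet (A t)) (J : Finset ι) :
    (∑ t ∈ J, μ (A t)) ^ 2 ≤ (∑ r ∈ J, ∑ t ∈ J, μ (A r ∩ A t)) * μ (⋃ t ∈ J, A t) := by
  set f : Ω → ℝ≥0∞ := fun ω => ∑ t ∈ J, (A t).indicator 1 ω
  have hf : Measurable f := Finset.measurable_sum _ fun t _ => measurable_one.indicator (hA t)
  have hsupp : Function.support f ⊆ ⋃ t ∈ J, A t := by
    intro ω hω
    obtain ⟨t, ht, hωt⟩ := exists_ne_zero_of_sum_ne_zero hω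
    exact Set.mem_biUnion ht (Set.mem_of_indicator_ne_zero hωt)
  have hint : ∫⁻ ω, f ω ∂μ = ∑ t ∈ J, μ (A t) := by
    rw [lintegral_finsetSum _ fun t _ => measurable_one.indicator (hA t)]
    exact sum_congr rfl fun t _ => lintegral_indicator_one (hA t)
  have hint2 : ∫⁻ ω, f ω ^ 2 ∂μ = ∑ r ∈ J, ∑ t ∈ J, μ (A r ∩ A t) := by
    have hpt : ∀ ω, f ω ^ 2 = ∑ r ∈ J, ∑ t ∈ J, (A r ∩ A t).indicator 1 ω := fun ω => by
      simp only [f, sq, sum_mul_sum, Set.inter_indicator_one, Pi.mul_apply]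
    simp only [hpt]
    rw [lintegral_finsetSum _ fun r _ => Finset.measurable_sum _
      fun t _ => measurable_one.indicator ((hA r).inter (hA t))]
    refine sum_congr rfl fun r _ => ?_
    rw [lintegral_finsetSum _ fun t _ => measurable_one.indicator ((hA r).inter (hA t))]
    exact sum_congr rfl fun t _ => lintegral_indicator_one ((hA r).inter (hA t))
  rw [← hint, ← hint2]
  exact sq_lintegral_le_lintegral_sq_mul_measure μ hf.aemeasurable
    (J.measurableSet_biUnion fun t _ => hA t) hsupp

lemma sq_sum_measureReal_le_sum_sum_measureReal_inter_mul {Ω ι : Type*} [MeasurableSpace Ω]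
    (μ : Measure Ω) [IsFiniteMeasure μ] {A : ι → Set Ω} (hA : ∀ t, MeasurableSet (A t))
    (J : Finset ι) :
    (∑ t ∈ J, μ.real (A t)) ^ 2 ≤
      (∑ r ∈ J, ∑ t ∈ J, μ.real (A r ∩ A t)) * μ.real (⋃ t ∈ J, A t) := by
  have h := ENNReal.toReal_mono (by simp [ENNReal.mul_eq_top])
    (sq_sum_measure_le_sum_sum_measure_inter_mul μ hA J)
  simpa [ENNReal.toReal_sum, ENNReal.sum_ne_top, measureReal_def] using h

lemma one_le_mul_of_sq_sub_le {S : ℕ → ℝ} (hS : Tendsto S atTop atTop) {a c m : ℝ}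
    (h : ∀ᶠ n in atTop, (S n - a) ^ 2 ≤ (S n + c * S n ^ 2) * m) : 1 ≤ c * m := by
  have hlhs : Tendsto (fun n => (1 - a / S n) ^ 2) atTop (𝓝 1) := by
    simpa using ((tendsto_const_nhds (x := (1 : ℝ))).sub
      (tendsto_const_nhds.div_atTop hS)).pow 2
  have hrhs : Tendsto (fun n => ((S n)⁻¹ + c) * m) atTop (𝓝 (c * m)) := by
    simpa using (hS.inv_tendsto_atTop.add_const c).mul_const m
  refine le_of_tendsto_of_tendsto hlhs hrhs ?_
  filter_upwards [h, hS.eventually_gt_atTop 0] with n hn hSn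
  calc (1 - a / S n) ^ 2 = (S n - a) ^ 2 / S n ^ 2 := by field_simp
    _ ≤ (S n + c * S n ^ 2) * m / S n ^ 2 := by gcongr
    _ = ((S n)⁻¹ + c) * m := by field_simp

lemma tendsto_sum_Ioc_toReal_atTop {f : ℕ → ℝ≥0∞} (hf : ∀ t, f t ≠ ∞)
    (h : ∑' t, f (t + 1) = ∞) : Tendsto (fun n => ∑ t ∈ Ioc 0 n, (f t).toReal) atTop atTop := by
  have hshift : ∀ n, ∑ t ∈ Ioc 0 n, (f t).toReal = ∑ t ∈ range n, (f (t + 1)).toReal := by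
    intro n
    rw [range_eq_Ico, sum_Ico_add' (fun t => (f t).toReal), ← Ico_add_one_add_one_eq_Ioc]
  simp only [hshift]
  rw [← not_summable_iff_tendsto_nat_atTop_of_nonneg fun _ => ENNReal.toReal_nonneg]
  intro hs
  refine ENNReal.ofReal_ne_top (r := ∑' t, (f (t + 1)).toReal) ?_
  rwa [ENNReal.ofReal_tsum_of_nonneg (fun _ => ENNReal.toReal_nonneg) hs,
    tsum_congr fun t => ENNReal.ofReal_toReal (hf (t + 1))]

theorem one_div_le_measureReal_limsup_of_sum_inter_le {Ω : Type*} [MeasurableSpace Ω]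
    (μ : Measure Ω) [IsFiniteMeasure μ] {A : ℕ → Set Ω} (hA : ∀ t, MeasurableSet (A t))
    (hdiv : Tendsto (fun n => ∑ t ∈ Ioc 0 n, μ.real (A t)) atTop atTop) {c : ℝ}
    (hpair : ∀ n, ∑ r ∈ Ioc 0 n, ∑ t ∈ Ioc 0 n, μ.real (A r ∩ A t) ≤
      ∑ t ∈ Ioc 0 n, μ.real (A t) + c * (∑ t ∈ Ioc 0 n, μ.real (A t)) ^ 2) :
    1 / c ≤ μ.real (limsup A atTop) := by
  set S := fun n => ∑ t ∈ Ioc 0 n, μ.real (A t)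
  have htail : ∀ k, 1 / c ≤ μ.real (⋃ i ≥ k, A i) := by
    intro k
    have hk : 1 ≤ c * μ.real (⋃ i ≥ k, A i) := by
      refine one_le_mul_of_sq_sub_le hdiv (a := S k) ?_
      filter_upwards [eventually_ge_atTop k] with n hkn
      have hJ : Ioc k n ⊆ Ioc 0 n := Ioc_subset_Ioc_left k.zero_le
      calc (S n - S k) ^ 2 = (∑ t ∈ Ioc k n, μ.real (A t)) ^ 2 := by
            rw [show S n = S k + _ from (sum_Ioc_consecutive _ k.zero_le hkn).symm,
              add_sub_cancel_left]
        _ ≤ (∑ r ∈ Ioc k n, ∑ t ∈ Ioc k n, μ.real (A r ∩ A t)) *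
              μ.real (⋃ t ∈ Ioc k n, A t) :=
            sq_sum_measureReal_le_sum_sum_measureReal_inter_mul μ hA _
        _ ≤ (∑ r ∈ Ioc 0 n, ∑ t ∈ Ioc 0 n, μ.real (A r ∩ A t)) * μ.real (⋃ i ≥ k, A i) := by
            refine mul_le_mul ?_ (measureReal_mono ?_ (measure_ne_top _ _)) measureReal_nonneg
              (sum_nonneg fun _ _ => sum_nonneg fun _ _ => measureReal_nonneg)
            · exact (sum_le_sum fun r _ => sum_le_sum_of_subset_of_nonneg hJ
                fun _ _ _ => measureReal_nonneg).trans (sum_le_sum_of_subset_of_nonneg hJ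
                fun _ _ _ => sum_nonneg fun _ _ => measureReal_nonneg)
            · exact Set.iUnion₂_subset fun t ht =>
                Set.subset_biUnion_of_mem (u := A) (mem_Ioc.1 ht).1.le
        _ ≤ (S n + c * S n ^ 2) * μ.real (⋃ i ≥ k, A i) := by gcongr; exact hpair n
    have hc : 0 < c := pos_of_mul_pos_left (one_pos.trans_le hk) measureReal_nonneg
    rw [div_le_iff₀ hc]
    linarith
  have hlim : Tendsto (fun k => μ.real (⋃ i ≥ k, A i)) atTop (𝓝 (μ.real (limsup A atTop))) := by
    rw [limsup_eq_iInf_iSup_of_nat]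
    exact (ENNReal.tendsto_toReal (measure_ne_top _ _)).comp
      (tendsto_measure_iInter_atTop (fun k => (MeasurableSet.biUnion (Set.to_countable _)
        fun i _ => hA i).nullMeasurableSet) (fun a b hab => Set.biUnion_mono
          (fun i hi => hab.trans hi) fun _ _ => le_rfl) ⟨0, measure_ne_top _ _⟩)
  exact ge_of_tendsto' hlim htail

/-- Nonnegative (possibly infinite) random variables `Y₁, Y₂, …` satisfying the
subadditivity-type bound `P(Y_r > x, Y_t > x) ≤ P(Y_r > x) P(Y_{t-r} > x)` for `1 ≤ r < t`:
if `∑ₜ P(Y_t > x) = ∞` for some `x > 0`, then `P(Y_t > x i.o.) ≥ 1/2`. -/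
theorem statement3 {Ω : Type*} [MeasurableSpace Ω] (μ : Measure Ω) [IsProbabilityMeasure μ]
    (Y : ℕ → Ω → ℝ≥0∞) (hY : ∀ t, Measurable (Y t))
    (hsub : ∀ x : ℝ≥0∞, 0 < x → ∀ r t : ℕ, 1 ≤ r → r < t →
      (μ ({ω | x < Y r ω} ∩ {ω | x < Y t ω})).toReal ≤
        (μ {ω | x < Y r ω}).toReal * (μ {ω | x < Y (t - r) ω}).toReal)
    (x : ℝ≥0∞) (hx : 0 < x)
    (hdiv : ∑' t : ℕ, μ {ω | x < Y (t + 1) ω} = ⊤) :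
    1 / 2 ≤ (μ (Filter.limsup (fun t => {ω | x < Y t ω}) atTop)).toReal := by
  set A : ℕ → Set Ω := fun t => {ω | x < Y t ω}
  have hA : ∀ t, MeasurableSet (A t) := fun t => measurableSet_lt measurable_const (hY t)
  have hpair (n : ℕ) := sum_Ioc_sum_Ioc_le_of_le_mul_sub (p := fun t => μ.real (A t))
    (q := fun r t => μ.real (A r ∩ A t)) (fun _ => measureReal_nonneg)
    (fun t => by simp only [Set.inter_self]) (fun r t => by simp only [Set.inter_comm])
    (hsub x hx) n
  exact one_div_le_measureReal_limsup_of_sum_inter_le μ hA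
    (tendsto_sum_Ioc_toReal_atTop (fun _ => measure_ne_top _ _) hdiv) hpair
end
end

section
/- Let {(M_t, Z_t); t ≥ 1} be i.i.d. in R^{d×d} × R^d with ‖M_1 ⋯ M_t‖ → 0 a.s. as t → ∞ (condition C0). If sup_{t ≥ 1} |(∏_{j=1}^{t-1} M_j) Z_t| < ∞ almost surely, then (∏_{j=1}^{t-1} M_j) Z_t → 0 almost surely as t → ∞. -/
/-!
Write `Y_t = (M₀ ⋯ M_{t-1}) Z_t`. For `t ≥ k` we have `Y_t = (M₀ ⋯ M_{k-1}) Y⁽ᵏ⁾_{t-k}`, where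
`Y⁽ᵏ⁾` is built in the same way from the shifted sequence `(M_{k+j}, Z_{k+j})_j`; being i.i.d.,
that sequence has the same law as the original one, so `sup_t |Y⁽ᵏ⁾_t| > A` has the same
probability as `sup_t |Y_t| > A`, which is small for large `A`. By C0, `‖M₀ ⋯ M_{k-1}‖ < ε / A`
with probability close to one for large `k`, and on the intersection of the two good events
`|Y_t| ≤ ε` for every `t ≥ k`.
-/

open MeasureTheory ProbabilityTheory Filter

noncomputable section

open Topology

instance {m n : Type*} [Countable m] [Countable n] : BorelSpace (Matrix m n ℝ) :=
  inferInstanceAs (BorelSpace (m → n → ℝ))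

instance {m n : Type*} [Countable m] [Countable n] : SecondCountableTopology (Matrix m n ℝ) :=
  inferInstanceAs (SecondCountableTopology (m → n → ℝ))

section Matrix

variable {d : ℕ}

theorem continuous_toEuclideanCLM :
    Continuous (Matrix.toEuclideanCLM (𝕜 := ℝ) (n := Fin d)) :=
  LinearMap.continuous_of_finiteDimensional
    (Matrix.toEuclideanCLM (𝕜 := ℝ) (n := Fin d)).toAlgEquiv.toLinearMap

theorem continuous_app :
    Continuous fun p : Matrix (Fin d) (Fin d) ℝ × EuclideanSpace ℝ (Fin d) => app p.1 p.2 := by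
  unfold app
  exact (continuous_toEuclideanCLM.comp continuous_fst).clm_apply continuous_snd

theorem Measurable.app {α : Type*} [MeasurableSpace α] {f : α → Matrix (Fin d) (Fin d) ℝ}
    {g : α → EuclideanSpace ℝ (Fin d)} (hf : Measurable f) (hg : Measurable g) :
    Measurable fun a => app (f a) (g a) := by
  have h := continuous_app.measurable.comp (hf.prodMk hg)
  exact h

theorem measurable_sNorm : Measurable (sNorm (d := d)) :=
  (continuous_norm.comp continuous_toEuclideanCLM).measurable

theorem sNorm_nonneg (A : Matrix (Fin d) (Fin d) ℝ) : 0 ≤ sNorm A := norm_nonneg _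

theorem norm_app_le (A : Matrix (Fin d) (Fin d) ℝ) (v : EuclideanSpace ℝ (Fin d)) :
    ‖app A v‖ ≤ sNorm A * ‖v‖ :=
  (Matrix.toEuclideanCLM (𝕜 := ℝ) A).le_opNorm v

theorem app_mul (A B : Matrix (Fin d) (Fin d) ℝ) (v : EuclideanSpace ℝ (Fin d)) :
    app (A * B) v = app A (app B v) := by
  simp [app, map_mul]

variable {Ω : Type*}

theorem prodTo_add (M : ℕ → Ω → Matrix (Fin d) (Fin d) ℝ) (k t : ℕ) (ω : Ω) :
    prodTo M (k + t) ω = prodTo M k ω * prodTo (fun j => M (k + j)) t ω := by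
  simp only [prodTo, List.range_add, List.map_append, List.prod_append, List.map_map]
  rfl

theorem measurable_prodTo [MeasurableSpace Ω] {M : ℕ → Ω → Matrix (Fin d) (Fin d) ℝ}
    (hM : ∀ j, Measurable (M j)) (n : ℕ) : Measurable (prodTo M n) := by
  have := ((List.range n).map M).measurable_fun_prod (by simpa using fun j _ => hM j)
  simp only [List.map_map, Function.comp_def] at this
  exact this

end Matrix

section IID

variable {Ω β : Type*} [MeasurableSpace Ω] [MeasurableSpace β] {μ : Measure Ω} {W : ℕ → Ω → β}

theorem IsIIDSeq.map_shift (h : IsIIDSeq μ W) (hW : ∀ t, Measurable (W t)) (k : ℕ) :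
    μ.map (fun ω i => W (k + i) ω) = μ.map (fun ω i => W i ω) := by
  rw [(h.1.precomp (add_right_injective k)).map_fun_eq_infinitePi_map fun i => hW _,
    h.1.map_fun_eq_infinitePi_map hW]
  congr with i : 1
  simp only [(h.2 _).map_eq]

theorem IsIIDSeq.measure_shift_preimage (h : IsIIDSeq μ W) (hW : ∀ t, Measurable (W t)) (k : ℕ)
    {s : Set (ℕ → β)} (hs : MeasurableSet s) :
    μ ((fun ω i => W (k + i) ω) ⁻¹' s) = μ ((fun ω i => W i ω) ⁻¹' s) := by
  rw [← Measure.map_apply (measurable_pi_lambda _ fun i => hW _) hs, h.map_shift hW k,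
    Measure.map_apply (measurable_pi_lambda _ hW) hs]

end IID

section Convergence

variable {Ω : Type*} [MeasurableSpace Ω] {μ : Measure Ω}

theorem ae_tendsto_zero_of_forall_ae_eventually_norm_le {ι E : Type*} [SeminormedAddGroup E]
    {l : Filter ι} {Y : ι → Ω → E} (h : ∀ ε > 0, ∀ᵐ ω ∂μ, ∀ᶠ t in l, ‖Y t ω‖ ≤ ε) :
    ∀ᵐ ω ∂μ, Tendsto (fun t => Y t ω) l (𝓝 0) := by
  have hall := ae_all_iff.2 fun m : ℕ => h (1 / ((m : ℝ) + 1)) (by positivity)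
  filter_upwards [hall] with ω hω
  rw [NormedAddGroup.tendsto_nhds_zero]
  intro ε hε
  obtain ⟨m, hm⟩ := exists_nat_one_div_lt hε
  exact (hω m).mono fun t ht => ht.trans_lt hm

theorem tendsto_measure_le_of_ae_tendsto_zero [IsFiniteMeasure μ] {f : ℕ → Ω → ℝ}
    (hf : ∀ n, AEStronglyMeasurable (f n) μ) (h : ∀ᵐ ω ∂μ, Tendsto (fun n => f n ω) atTop (𝓝 0))
    {δ : ℝ} (hδ : 0 < δ) : Tendsto (fun n => μ {ω | δ ≤ f n ω}) atTop (𝓝 0) := by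
  have hdist := tendstoInMeasure_iff_dist.1 (tendstoInMeasure_of_tendsto_ae hf h) δ hδ
  refine tendsto_of_tendsto_of_tendsto_of_le_of_le tendsto_const_nhds hdist (fun _ => zero_le)
    fun n => measure_mono fun ω hω => ?_
  simpa only [Set.mem_ofPred_eq, Real.dist_0_eq_abs] using hω.trans (le_abs_self _)

theorem tendsto_measure_exists_lt_of_ae_bddAbove {ι : Type*} [Countable ι] [IsFiniteMeasure μ]
    {f : ι → Ω → ℝ} (hf : ∀ i, Measurable (f i)) (h : ∀ᵐ ω ∂μ, ∃ C, ∀ i, f i ω ≤ C) :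
    Tendsto (fun A : ℝ => μ {ω | ∃ i, A < f i ω}) atTop (𝓝 0) := by
  have hanti : Antitone fun A : ℝ => {ω | ∃ i, A < f i ω} :=
    fun A B hAB ω ⟨i, hi⟩ => ⟨i, hAB.trans_lt hi⟩
  have hmeas : ∀ A : ℝ, NullMeasurableSet {ω | ∃ i, A < f i ω} μ := fun A => by
    simp only [Set.ofPred_exists]
    exact (MeasurableSet.iUnion fun i => measurableSet_lt measurable_const (hf i)).nullMeasurableSet
  have hnull : μ (⋂ A : ℝ, {ω | ∃ i, A < f i ω}) = 0 := by
    refine measure_mono_null (fun ω hω => ?_) (ae_iff.1 h)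
    simp only [Set.mem_iInter, Set.mem_ofPred_eq, not_exists, not_forall, not_le] at hω ⊢
    exact hω
  simpa only [hnull, Function.comp_def] using
    tendsto_measure_iInter_atTop hmeas hanti ⟨0, measure_ne_top μ _⟩

end Convergence

/-- The paper's `(M₁ ⋯ M_t) Z_{t+1}`, in 0-based indexing. -/
def perpetuityTerm {Ω : Type*} {d : ℕ} (M : ℕ → Ω → Matrix (Fin d) (Fin d) ℝ)
    (Z : ℕ → Ω → EuclideanSpace ℝ (Fin d)) (t : ℕ) (ω : Ω) : EuclideanSpace ℝ (Fin d) :=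
  app (prodTo M t ω) (Z t ω)

section Perpetuity

variable {d : ℕ} {Ω : Type*} {M : ℕ → Ω → Matrix (Fin d) (Fin d) ℝ}
  {Z : ℕ → Ω → EuclideanSpace ℝ (Fin d)}

theorem perpetuityTerm_add (k t : ℕ) (ω : Ω) :
    perpetuityTerm M Z (k + t) ω =
      app (prodTo M k ω) (perpetuityTerm (fun j => M (k + j)) (fun j => Z (k + j)) t ω) := by
  rw [perpetuityTerm, prodTo_add, app_mul, perpetuityTerm]

theorem measurable_perpetuityTerm [MeasurableSpace Ω] (hM : ∀ j, Measurable (M j))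
    (hZ : ∀ j, Measurable (Z j)) (t : ℕ) : Measurable (perpetuityTerm M Z t) :=
  (measurable_prodTo hM t).app (hZ t)

theorem IsIIDSeq.measure_exists_lt_norm_perpetuityTerm_shift [MeasurableSpace Ω] {μ : Measure Ω}
    (h : IsIIDSeq μ fun t ω => (M t ω, Z t ω)) (hM : ∀ j, Measurable (M j))
    (hZ : ∀ j, Measurable (Z j)) (k : ℕ) (A : ℝ) :
    μ {ω | ∃ t, A < ‖perpetuityTerm (fun j => M (k + j)) (fun j => Z (k + j)) t ω‖} =
      μ {ω | ∃ t, A < ‖perpetuityTerm M Z t ω‖} := by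
  let S : Set (ℕ → Matrix (Fin d) (Fin d) ℝ × EuclideanSpace ℝ (Fin d)) :=
    {w | ∃ t, A < ‖perpetuityTerm (fun j w => (w j).1) (fun j w => (w j).2) t w‖}
  have hS : MeasurableSet S := by
    simp only [S, Set.ofPred_exists]
    exact MeasurableSet.iUnion fun t => measurableSet_lt measurable_const
      (measurable_perpetuityTerm (fun j => (measurable_pi_apply j).fst)
        (fun j => (measurable_pi_apply j).snd) t).norm
  exact h.measure_shift_preimage (fun t => (hM t).prodMk (hZ t)) k hS

theorem measure_not_eventually_norm_perpetuityTerm_le_le [MeasurableSpace Ω] {μ : Measure Ω}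
    {ε A : ℝ} (hA : 0 < A) (k : ℕ) :
    μ {ω | ¬∀ᶠ t in atTop, ‖perpetuityTerm M Z t ω‖ ≤ ε} ≤
      μ {ω | ε / A ≤ sNorm (prodTo M k ω)} +
        μ {ω | ∃ t, A < ‖perpetuityTerm (fun j => M (k + j)) (fun j => Z (k + j)) t ω‖} := by
  refine (measure_mono fun ω hω => ?_).trans (measure_union_le _ _)
  by_contra hgood
  simp only [Set.mem_union, Set.mem_ofPred_eq, not_or, not_le, not_exists, not_lt] at hgood
  obtain ⟨hsmall, hbdd⟩ := hgood
  refine hω (eventually_atTop.2 ⟨k, fun t hkt => ?_⟩)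
  obtain ⟨s, rfl⟩ := Nat.exists_eq_add_of_le hkt
  calc ‖perpetuityTerm M Z (k + s) ω‖
      ≤ sNorm (prodTo M k ω) *
          ‖perpetuityTerm (fun j => M (k + j)) (fun j => Z (k + j)) s ω‖ := by
        rw [perpetuityTerm_add]; exact norm_app_le _ _
    _ ≤ ε / A * A :=
        mul_le_mul hsmall.le (hbdd s) (norm_nonneg _) ((sNorm_nonneg _).trans hsmall.le)
    _ = ε := div_mul_cancel₀ ε hA.ne'

end Perpetuity

/-- Under C0, condition (v) implies (iv): if `sup_t |(M₁⋯M_{t-1}) Z_t| < ∞` a.s.,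
then `(M₁⋯M_{t-1}) Z_t → 0` a.s. -/
theorem statement6 {d : ℕ} {Ω : Type*} [MeasurableSpace Ω] (μ : Measure Ω)
    [IsProbabilityMeasure μ]
    (M : ℕ → Ω → Matrix (Fin d) (Fin d) ℝ) (Z : ℕ → Ω → EuclideanSpace ℝ (Fin d))
    (hM : ∀ t, Measurable (M t)) (hZ : ∀ t, Measurable (Z t))
    (hiid : IsIIDSeq μ (fun t ω => (M t ω, Z t ω)))
    (hC0 : ∀ᵐ ω ∂μ, Tendsto (fun t => sNorm (prodTo M t ω)) atTop (nhds 0))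
    (hsup : ∀ᵐ ω ∂μ, ∃ C : ℝ, ∀ t, ‖app (prodTo M t ω) (Z t ω)‖ ≤ C) :
    ∀ᵐ ω ∂μ, Tendsto (fun t => app (prodTo M t ω) (Z t ω)) atTop (nhds 0) := by
  refine ae_tendsto_zero_of_forall_ae_eventually_norm_le (Y := perpetuityTerm M Z)
    fun ε hε => ?_
  rw [ae_iff, ← nonpos_iff_eq_zero]
  have hbdd : Tendsto (fun A => μ {ω | ∃ t, A < ‖perpetuityTerm M Z t ω‖}) atTop (𝓝 0) :=
    tendsto_measure_exists_lt_of_ae_bddAbove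
      (fun t => (measurable_perpetuityTerm hM hZ t).norm) hsup
  refine ge_of_tendsto hbdd ((eventually_gt_atTop 0).mono fun A hA => ?_)
  have hcontr : Tendsto (fun k => μ {ω | ε / A ≤ sNorm (prodTo M k ω)}) atTop (𝓝 0) :=
    tendsto_measure_le_of_ae_tendsto_zero
      (fun k => (measurable_sNorm.comp (measurable_prodTo hM k)).aestronglyMeasurable) hC0
      (div_pos hε hA)
  refine ge_of_tendsto (by simpa using hcontr.add_const _) (.of_forall fun k => ?_)
  rw [← hiid.measure_exists_lt_norm_perpetuityTerm_shift hM hZ k A]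
  exact measure_not_eventually_norm_perpetuityTerm_le_le hA k
end
end
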